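/- arXiv:1907.03344 — 5 statements merged into one kernel-verified Lean document; each statement's English description precedes it below -/
import Mathlib

section
/- Let D be a 2-(v,k,λ)_q subspace design on V and H a fixed hyperplane of V. Taking as points the 1-dimensional subspaces of V not contained in H, and as blocks the sets of 1-dimensional subspaces of B not contained in H for each block B not contained in H, one obtains a combinatorial 2-(q^{v-1}, q^{k-1}, λ) design. -/
/-! Write `H = ker f` for a linear functional `f`. A line not contained in `H` contains exactly
one vector `x` with `f x = 1`, so the lines of a subspace `W ⊄ H` that are not in `H` correspond
to the affine hyperplane `{x ∈ W | f x = 1}`, a translate of `W ∩ H`; hence there are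
`q ^ (dim W - 1)` of them. Two distinct such lines `P`, `Q` span a plane, and a block contains
both exactly when it contains `P ⊔ Q`; such a block is automatically not contained in `H`. -/

open Module Submodule

section Lines

variable {F V : Type*} [Field F] [AddCommGroup V] [Module F V]

lemma Module.Dual.natCard_fiber_one [Finite F] [FiniteDimensional F V] {f : Dual F V}
    (hf : f ≠ 0) : Nat.card {x // f x = 1} = Nat.card F ^ (finrank F V - 1) := by
  obtain ⟨w, hw⟩ := LinearMap.surjective hf 1
  have e : LinearMap.ker f ≃ {x // f x = 1} :=
    (Equiv.addRight w).subtypeEquiv fun x => by simp [hw]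
  have hrank := Dual.finrank_ker_add_one_of_ne_zero hf
  rw [← Nat.card_congr e, natCard_eq_pow_finrank (K := F)]
  congr 1
  omega

noncomputable def Module.Dual.fiberOneEquivLines (f : Dual F V) (W : Submodule F V) :
    {x : W // f x = 1} ≃
      {P : Submodule F V // finrank F P = 1 ∧ P ≤ W ∧ ¬ P ≤ LinearMap.ker f} :=
  Equiv.ofBijective
    (fun x => ⟨F ∙ (x.1 : V), finrank_span_singleton fun h => by simpa [h] using x.2,
      by simp, fun h => by simpa [x.2] using h (mem_span_singleton_self _)⟩)
    (by
      constructor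
      · rintro ⟨x, hx⟩ ⟨y, hy⟩ hxy
        have hyx : (y : V) ∈ F ∙ (x : V) := by
          have hspan : F ∙ (x : V) = F ∙ (y : V) := congrArg Subtype.val hxy
          rw [hspan]
          exact mem_span_singleton_self _
        obtain ⟨c, hc⟩ := mem_span_singleton.mp hyx
        have hc1 : c = 1 := by simpa [hx, hy] using congrArg f hc
        ext
        simp [← hc, hc1]
      · rintro ⟨P, hP, hPW, hPf⟩
        obtain ⟨p, hpP, hpf⟩ := SetLike.not_le_iff_exists.mp hPf
        have hfp : f p ≠ 0 := hpf
        have hxP : (f p)⁻¹ • p ∈ P := P.smul_mem _ hpP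
        refine ⟨⟨⟨_, hPW hxP⟩, by simp [hfp]⟩, ?_⟩
        have : FiniteDimensional F P := Module.finite_of_finrank_eq_succ hP
        ext1
        refine eq_of_le_of_finrank_eq (span_le.mpr (by simpa using hxP)) ?_
        have hp0 : p ≠ 0 := fun h => hfp (by simp [h])
        rw [hP, finrank_span_singleton (smul_ne_zero (inv_ne_zero hfp) hp0)])

lemma Module.Dual.natCard_lines_not_le_ker [Finite F] [FiniteDimensional F V] (f : Dual F V)
    {W : Submodule F V} (hW : ¬ W ≤ LinearMap.ker f) :
    Nat.card {P : Submodule F V // finrank F P = 1 ∧ P ≤ W ∧ ¬ P ≤ LinearMap.ker f}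
      = Nat.card F ^ (finrank F W - 1) := by
  have hf : f.domRestrict W ≠ 0 := fun h =>
    hW fun x hx => by simpa using LinearMap.congr_fun h ⟨x, hx⟩
  rw [← Nat.card_congr (f.fiberOneEquivLines W), ← natCard_fiber_one hf]
  rfl

lemma Submodule.exists_dual_ker_eq [FiniteDimensional F V] (H : Submodule F V)
    (hH : finrank F H + 1 = finrank F V) : ∃ f : Dual F V, LinearMap.ker f = H := by
  have hquot : finrank F (V ⧸ H) = finrank F F := by
    have := H.finrank_quotient_add_finrank
    rw [finrank_self]
    omega
  let e := LinearEquiv.ofFinrankEq _ _ hquot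
  refine ⟨e.toLinearMap ∘ₗ H.mkQ, ?_⟩
  rw [LinearMap.ker_comp, LinearEquiv.ker, comap_bot, ker_mkQ]

lemma Submodule.finrank_sup_eq_two [FiniteDimensional F V] {P Q : Submodule F V}
    (hP : finrank F P = 1) (hQ : finrank F Q = 1) (hPQ : P ≠ Q) : finrank F ↥(P ⊔ Q) = 2 := by
  have hlt : P ⊓ Q < P := inf_le_left.lt_of_ne fun h =>
    hPQ (eq_of_le_of_finrank_eq (inf_eq_left.mp h) (hP.trans hQ.symm))
  have := finrank_lt_finrank_of_lt hlt
  have := finrank_sup_add_finrank_inf_eq P Q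
  omega

end Lines

open Classical in
/-- Affine version: from a 2-(v,k,λ)_q subspace design and a fixed hyperplane H,
taking as points the 1-dimensional subspaces not contained in H and as blocks,
for each block B ⊄ H, the set of 1-dimensional subspaces of B not contained in H,
one obtains a combinatorial 2-(q^(v-1), q^(k-1), λ) design. -/
theorem stmt6 {F V : Type*} [Field F] [Fintype F] [AddCommGroup V] [Module F V]
    [FiniteDimensional F V]
    (q v k lam : ℕ) (hq : Fintype.card F = q)
    (hv : Module.finrank F V = v) (hk2 : 2 ≤ k) (hkv : k ≤ v)
    (H : Submodule F V) (hH : Module.finrank F H = v - 1)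
    (B : Finset (Submodule F V))
    (hk : ∀ b ∈ B, Module.finrank F b = k)
    (hdes : ∀ T : Submodule F V, Module.finrank F T = 2 →
      (B.filter (fun b => T ≤ b)).card = lam) :
    -- number of points
    Nat.card {P : Submodule F V // Module.finrank F P = 1 ∧ ¬ P ≤ H}
      = q ^ (v - 1) ∧
    -- size of each block's point set
    (∀ b ∈ B, ¬ b ≤ H →
      Nat.card {P : Submodule F V // Module.finrank F P = 1 ∧ P ≤ b ∧ ¬ P ≤ H}
        = q ^ (k - 1)) ∧
    -- every 2-subset of points lies in exactly λ blocks
    (∀ P Q : Submodule F V, Module.finrank F P = 1 → Module.finrank F Q = 1 →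
      ¬ P ≤ H → ¬ Q ≤ H → P ≠ Q →
      (B.filter (fun b => ¬ b ≤ H ∧ P ≤ b ∧ Q ≤ b)).card = lam) := by
  obtain ⟨f, rfl⟩ := H.exists_dual_ker_eq (by omega)
  rw [← hq, ← Nat.card_eq_fintype_card]
  refine ⟨?_, fun b hb hbH => ?_, fun P Q hP hQ hPH _ hPQ => ?_⟩
  · have hH_ne_top : ¬ ⊤ ≤ LinearMap.ker f := fun h => by
      rw [top_le_iff.mp h, finrank_top] at hH
      omega
    simpa [hv] using f.natCard_lines_not_le_ker hH_ne_top
  · rw [f.natCard_lines_not_le_ker hbH, hk b hb]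
  · rw [← hdes _ (finrank_sup_eq_two hP hQ hPQ)]
    congr 1
    refine Finset.filter_congr fun b _ => ?_
    simpa only [sup_le_iff, and_iff_right_iff_imp] using
      fun (h : P ≤ b ∧ Q ≤ b) hb => hPH (h.1.trans hb)
end

section
/- Let D be a 2-(v,k,λ)_2 subspace design on V = F_2^v. Taking as points the 2^v vectors of V, and as blocks all affine cosets (flats) x + B for blocks B of D and vectors x in V, one obtains a combinatorial 3-(2^v, 2^k, λ) design: every 3-element subset of V is contained in exactly λ such flats. -/
/-!
A flat containing `a` is `a + P` for its direction `P`, and it contains `b` and `c` iff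
`b - a, c - a ∈ P`. Hence the flats through `{a, b, c}` are the translates `a + P` of the
blocks `P ⊇ span {b - a, c - a}`, distinct for distinct `P`; over `𝔽₂` two distinct nonzero
vectors are independent, so this span is a 2-subspace and there are exactly `λ` such blocks.
-/

open Submodule

section Flats

variable {R V : Type*} [Ring R] [AddCommGroup V] [Module R V]

lemma mem_image_add_iff {P : Submodule R V} {a z : V} :
    z ∈ (a + ·) '' (P : Set V) ↔ z - a ∈ P := by
  rw [Set.image_add_left, Set.mem_preimage, neg_add_eq_sub, SetLike.mem_coe]

lemma image_add_eq_of_mem {P : Submodule R V} {x a : V}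
    (ha : a ∈ (x + ·) '' (P : Set V)) : (x + ·) '' (P : Set V) = (a + ·) '' P := by
  rw [mem_image_add_iff] at ha
  ext z
  simp only [mem_image_add_iff]
  constructor
  · intro hz
    simpa using P.sub_mem hz ha
  · intro hz
    simpa using P.add_mem hz ha

lemma triple_subset_image_add_iff {P : Submodule R V} {a b c : V} :
    {a, b, c} ⊆ (a + ·) '' (P : Set V) ↔ span R {b - a, c - a} ≤ P := by
  simp only [Set.insert_subset_iff, Set.singleton_subset_iff, mem_image_add_iff, sub_self,
    P.zero_mem, true_and, span_le, SetLike.mem_coe]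

lemma image_add_injective (a : V) :
    Function.Injective fun P : Submodule R V => (a + ·) '' (P : Set V) :=
  fun _ _ h => SetLike.coe_injective (Set.image_injective.2 (add_right_injective a) h)

lemma setOf_flat_superset_triple_eq_image (B : Set (Submodule R V)) (a b c : V) :
    {F : Set V | (∃ P ∈ B, ∃ x : V, F = (x + ·) '' (P : Set V)) ∧ {a, b, c} ⊆ F} =
      (fun P : Submodule R V => (a + ·) '' (P : Set V)) ''
        {P ∈ B | span R {b - a, c - a} ≤ P} := by
  ext F
  constructor
  · rintro ⟨⟨P, hP, x, rfl⟩, hsub⟩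
    have hflat := image_add_eq_of_mem (hsub (Set.mem_insert a _))
    rw [hflat] at hsub ⊢
    exact ⟨P, ⟨hP, triple_subset_image_add_iff.1 hsub⟩, rfl⟩
  · rintro ⟨P, ⟨hP, hspan⟩, rfl⟩
    exact ⟨⟨P, hP, a, rfl⟩, triple_subset_image_add_iff.2 hspan⟩

end Flats

section CharTwo

variable {V : Type*} [AddCommGroup V] [Module (ZMod 2) V]

lemma linearIndependent_pair_zmod_two {u w : V} (hu : u ≠ 0) (huw : u ≠ w) (hw : w ≠ 0) :
    LinearIndependent (ZMod 2) ![u, w] := by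
  refine (LinearIndependent.pair_iff' hu).2 fun t => ?_
  obtain rfl | rfl : t = 0 ∨ t = 1 := by revert t; decide
  · simpa using hw.symm
  · simpa using huw

lemma finrank_span_pair_zmod_two {u w : V} (hu : u ≠ 0) (huw : u ≠ w) (hw : w ≠ 0) :
    Module.finrank (ZMod 2) (span (ZMod 2) {u, w}) = 2 := by
  rw [← Matrix.range_cons_cons_empty u w ![], finrank_span_eq_card
    (linearIndependent_pair_zmod_two hu huw hw), Fintype.card_fin]

end CharTwo

open Classical in
theorem stmt7_general {V : Type*} [AddCommGroup V] [Module (ZMod 2) V]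
    [FiniteDimensional (ZMod 2) V]
    (v k lam : ℕ) (hv : Module.finrank (ZMod 2) V = v)
    (B : Finset (Submodule (ZMod 2) V))
    (hk : ∀ b ∈ B, Module.finrank (ZMod 2) b = k)
    (hdes : ∀ T : Submodule (ZMod 2) V, Module.finrank (ZMod 2) T = 2 →
      (B.filter (fun b => T ≤ b)).card = lam) :
    -- number of points
    Nat.card V = 2 ^ v ∧
    -- each flat has 2^k points
    (∀ b ∈ B, ∀ x : V, ((fun u => x + u) '' (b : Set V)).ncard = 2 ^ k) ∧
    -- every 3-element subset lies in exactly λ flats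
    (∀ a b c : V, a ≠ b → a ≠ c → b ≠ c →
      Set.ncard {Fl : Set V |
          (∃ bl ∈ B, ∃ x : V, Fl = (fun u => x + u) '' (bl : Set V)) ∧
          ({a, b, c} : Set V) ⊆ Fl} = lam) := by
  refine ⟨?_, fun P hP x => ?_, fun a b c hab hac hbc => ?_⟩
  · rw [Module.natCard_eq_pow_finrank (K := ZMod 2), Nat.card_zmod, hv]
  · rw [Set.ncard_image_of_injective _ (add_right_injective x), ← Nat.card_coe_set_eq,
      SetLike.coe_sort_coe, Module.natCard_eq_pow_finrank (K := ZMod 2), Nat.card_zmod, hk P hP]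
  · have hspan : Module.finrank (ZMod 2) (span (ZMod 2) {b - a, c - a}) = 2 :=
      finrank_span_pair_zmod_two (sub_ne_zero.2 hab.symm) (sub_left_injective.ne hbc)
        (sub_ne_zero.2 hac.symm)
    have hflats := setOf_flat_superset_triple_eq_image (B : Set (Submodule (ZMod 2) V)) a b c
    simp only [Finset.mem_coe] at hflats
    rw [hflats, Set.ncard_image_of_injective _ (image_add_injective a), ← hdes _ hspan,
      ← Set.ncard_coe_finset, Finset.coe_filter]

open Classical in
/-- From a 2-(v,k,λ)_2 subspace design, taking as points the 2^v vectors of V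
and as blocks all affine flats x + B for blocks B and x ∈ V, one obtains a
combinatorial 3-(2^v, 2^k, λ) design: every 3-element subset of V lies in
exactly λ such flats. -/
theorem stmt7 {V : Type*} [AddCommGroup V] [Module (ZMod 2) V]
    [FiniteDimensional (ZMod 2) V]
    (v k lam : ℕ) (hv : Module.finrank (ZMod 2) V = v) (hk2 : 2 ≤ k) (hkv : k ≤ v)
    (B : Finset (Submodule (ZMod 2) V))
    (hk : ∀ b ∈ B, Module.finrank (ZMod 2) b = k)
    (hdes : ∀ T : Submodule (ZMod 2) V, Module.finrank (ZMod 2) T = 2 →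
      (B.filter (fun b => T ≤ b)).card = lam) :
    -- number of points
    Nat.card V = 2 ^ v ∧
    -- each flat has 2^k points
    (∀ b ∈ B, ∀ x : V, ((fun u => x + u) '' (b : Set V)).ncard = 2 ^ k) ∧
    -- every 3-element subset lies in exactly λ flats
    (∀ a b c : V, a ≠ b → a ≠ c → b ≠ c →
      Set.ncard {Fl : Set V |
          (∃ bl ∈ B, ∃ x : V, Fl = (fun u => x + u) '' (bl : Set V)) ∧
          ({a, b, c} : Set V) ⊆ Fl} = lam) :=
  stmt7_general v k lam hv B hk hdes
end

section
/- Let N be the b×v incidence matrix of a combinatorial 2-(v,k,λ) design with replication number r, and p a prime. If p does not divide r(r−λ), then N has rank v over F_p. -/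
/-!
The Gram matrix of the incidence matrix is `Nᵀ N = (r - λ) I + λ J`, and every column of `N` sums
to `r`. If `N c = 0`, summing the entries of `N c` gives `r ∑ cᵢ = 0`, hence `J c = 0`, and then
`0 = Nᵀ N c = (r - λ) c`. So `N` is injective over `F_p` as soon as `r` and `r - λ` are units there.
-/

open Finset Matrix

namespace Matrix

variable {m n K : Type*} [Fintype m] [Fintype n] [DecidableEq n] [Field K]

theorem rank_eq_card_width_of_transpose_mul_self_eq (N : Matrix m n K) {a b c : K}
    (ha : a ≠ 0) (hc : c ≠ 0) (hcol : (fun _ : m ↦ 1) ᵥ* N = fun _ ↦ c)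
    (hgram : Nᵀ * N = a • 1 + of fun _ _ ↦ b) :
    N.rank = Fintype.card n := by
  have hinj : Function.Injective N.mulVecLin := by
    refine LinearMap.ker_eq_bot.1 <| ker_mulVecLin_eq_bot_iff.2 fun (x : n → K) hx ↦ ?_
    have hsum : ∑ j, x j = 0 := by
      have := congrArg ((fun _ : m ↦ (1 : K)) ⬝ᵥ ·) hx
      simp only [dotProduct_mulVec, hcol, dotProduct_zero] at this
      simpa [dotProduct, ← Finset.mul_sum, hc] using this
    have hgx : (Nᵀ * N) *ᵥ x = a • x := by
      have hJ : (of fun _ _ ↦ b : Matrix n n K) *ᵥ x = 0 := by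
        ext j
        simp [mulVec, dotProduct, ← Finset.mul_sum, hsum]
      rw [hgram, add_mulVec, hJ, add_zero, smul_mulVec, one_mulVec]
    rw [← mulVec_mulVec, hx, mulVec_zero] at hgx
    exact (smul_eq_zero.1 hgx.symm).resolve_left ha
  rw [rank, LinearMap.finrank_range_of_inj hinj, Module.finrank_fintype_fun_eq_card]

end Matrix

namespace Finset

variable {α : Type*} [DecidableEq α] (R : Type*)

def incidenceMatrix [Zero R] [One R] (B : Finset (Finset α)) : Matrix B α R :=
  of fun s x ↦ if x ∈ s.1 then 1 else 0

variable {R} {B : Finset (Finset α)}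

theorem one_vecMul_incidenceMatrix [Semiring R] :
    (fun _ ↦ 1) ᵥ* incidenceMatrix R B = fun x ↦ (#{s ∈ B | x ∈ s} : R) := by
  ext x
  simp only [incidenceMatrix, vecMul, dotProduct, of_apply, one_mul]
  rw [sum_coe_sort B fun s ↦ if x ∈ s then (1 : R) else 0, sum_boole]

theorem transpose_mul_incidenceMatrix_apply [Semiring R] (x y : α) :
    ((incidenceMatrix R B)ᵀ * incidenceMatrix R B) x y = #{s ∈ B | x ∈ s ∧ y ∈ s} := by
  simp only [incidenceMatrix, mul_apply, transpose_apply, of_apply, boole_mul, ← ite_and]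
  rw [sum_coe_sort B fun s ↦ if x ∈ s ∧ y ∈ s then (1 : R) else 0, sum_boole]

theorem transpose_mul_incidenceMatrix_eq [Ring R] {lam r : ℕ}
    (hpair : ∀ x y : α, x ≠ y → #{s ∈ B | x ∈ s ∧ y ∈ s} = lam)
    (hrep : ∀ x : α, #{s ∈ B | x ∈ s} = r) :
    (incidenceMatrix R B)ᵀ * incidenceMatrix R B =
      ((r : R) - lam) • 1 + of fun _ _ ↦ (lam : R) := by
  ext x y
  rw [transpose_mul_incidenceMatrix_apply]
  rcases eq_or_ne x y with rfl | hxy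
  · simp [hrep]
  · simp [hpair x y hxy, hxy]

end Finset

theorem stmt9_general {α : Type*} [Fintype α] [DecidableEq α]
    (v lam r p : ℕ) (hp : p.Prime)
    (hv : Fintype.card α = v)
    (B : Finset (Finset α))
    (hdes : ∀ x y : α, x ≠ y →
      (B.filter (fun s => x ∈ s ∧ y ∈ s)).card = lam)
    (hrep : ∀ x : α, (B.filter (fun s => x ∈ s)).card = r)
    (N : Matrix {s // s ∈ B} α (ZMod p))
    (hN : ∀ s x, N s x = if x ∈ s.1 then 1 else 0)
    (hndvd : ¬ ((p : ℤ) ∣ (r : ℤ) * ((r : ℤ) - (lam : ℤ)))) :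
    N.rank = v := by
  have : Fact p.Prime := ⟨hp⟩
  obtain ⟨hr, hrl⟩ : (r : ZMod p) ≠ 0 ∧ (r : ZMod p) - lam ≠ 0 := by
    rw [← mul_ne_zero_iff]
    exact_mod_cast mt (ZMod.intCast_zmod_eq_zero_iff_dvd _ p).1 hndvd
  obtain rfl : N = incidenceMatrix (ZMod p) B := Matrix.ext hN
  subst hv
  exact rank_eq_card_width_of_transpose_mul_self_eq _ hrl hr
    (one_vecMul_incidenceMatrix.trans (funext fun x ↦ by rw [hrep]))
    (transpose_mul_incidenceMatrix_eq hdes hrep)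

/-- Hamada: if p does not divide r(r−λ), the incidence matrix of a
2-(v,k,λ) design with replication number r has full rank v over F_p. -/
theorem stmt9 {α : Type*} [Fintype α] [DecidableEq α]
    (v k lam r p : ℕ) (hp : p.Prime)
    (hv : Fintype.card α = v) (hk2 : 2 ≤ k) (hkv : k ≤ v)
    (B : Finset (Finset α))
    (hk : ∀ s ∈ B, s.card = k)
    (hdes : ∀ x y : α, x ≠ y →
      (B.filter (fun s => x ∈ s ∧ y ∈ s)).card = lam)
    (hrep : ∀ x : α, (B.filter (fun s => x ∈ s)).card = r)
    (N : Matrix {s // s ∈ B} α (ZMod p))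
    (hN : ∀ s x, N s x = if x ∈ s.1 then 1 else 0)
    (hndvd : ¬ ((p : ℤ) ∣ (r : ℤ) * ((r : ℤ) - (lam : ℤ)))) :
    N.rank = v :=
  stmt9_general v lam r p hp hv B hdes hrep N hN hndvd
end

section
/- Let N be the incidence matrix of a combinatorial 2-(v,k,λ) design with replication number r, and p a prime. If the rank of N over F_p is strictly less than v−1, then p divides r−λ. -/
open Finset Matrix

/-!
Over `𝔽_p` the Gram matrix of the design is `Nᵀ N = (r - λ) I + λ J`. If `p ∤ r - λ`, the
first summand has full rank `v` while `λ J` has rank at most one, so by subadditivity of rank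
`v ≤ rank (Nᵀ N) + 1 ≤ rank N + 1`.
-/

theorem Matrix.rank_add_le {K m n : Type*} [Field K] [Fintype n] (A B : Matrix m n K) :
    (A + B).rank ≤ A.rank + B.rank := by
  rw [Matrix.rank, Matrix.rank, Matrix.rank, Matrix.mulVecLin_add]
  calc Module.finrank K (LinearMap.range (A.mulVecLin + B.mulVecLin))
      ≤ Module.finrank K ↥(LinearMap.range A.mulVecLin ⊔ LinearMap.range B.mulVecLin) :=
        Submodule.finrank_mono (LinearMap.range_add_le _ _)
    _ ≤ _ := Submodule.finrank_add_le_finrank_add_finrank _ _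

theorem Matrix.rank_neg {R m n : Type*} [CommRing R] [Fintype n] (A : Matrix m n R) :
    (-A).rank = A.rank := by
  rw [← neg_one_smul R A]
  exact rank_smul_of_mem_nonZeroDivisors A isUnit_one.neg.mem_nonZeroDivisors

theorem Matrix.card_le_rank_smul_one_add_add_rank {K n : Type*} [Field K] [Fintype n]
    [DecidableEq n] {c : K} (hc : c ≠ 0) (A : Matrix n n K) :
    Fintype.card n ≤ (c • 1 + A).rank + A.rank := by
  calc Fintype.card n = (c • 1 : Matrix n n K).rank := by
        rw [rank_smul_of_mem_nonZeroDivisors _ (mem_nonZeroDivisors_of_ne_zero hc), rank_one]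
    _ = ((c • 1 + A) + -A).rank := by rw [add_neg_cancel_right]
    _ ≤ (c • 1 + A).rank + (-A).rank := rank_add_le _ _
    _ = (c • 1 + A).rank + A.rank := by rw [rank_neg]

theorem Matrix.rank_of_const_le_one {K m n : Type*} [Field K] [Fintype n] (d : K) :
    (of fun (_ : m) (_ : n) => d).rank ≤ 1 := by
  simpa [vecMulVec] using rank_vecMulVec_le (fun _ : m => d) (fun _ : n => (1 : K))

section Incidence

variable {α R : Type*} [DecidableEq α] {B : Finset (Finset α)}
  {N : Matrix {s // s ∈ B} α R}

theorem transpose_mul_self_apply_of_incidence [NonAssocSemiring R]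
    (hN : ∀ s x, N s x = if x ∈ s.1 then 1 else 0) (x y : α) :
    (Nᵀ * N) x y = #{s ∈ B | x ∈ s ∧ y ∈ s} := by
  simp only [mul_apply, transpose_apply, hN, ite_zero_mul_ite_zero, mul_one]
  rw [Finset.sum_coe_sort B (fun s => if x ∈ s ∧ y ∈ s then (1 : R) else 0), Finset.sum_boole]

theorem transpose_mul_self_eq_of_design [Ring R] {lam r : ℕ}
    (hN : ∀ s x, N s x = if x ∈ s.1 then 1 else 0)
    (hdes : ∀ x y : α, x ≠ y → #{s ∈ B | x ∈ s ∧ y ∈ s} = lam)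
    (hrep : ∀ x : α, #{s ∈ B | x ∈ s} = r) :
    Nᵀ * N = ((r : R) - lam) • 1 + of fun _ _ => (lam : R) := by
  ext x y
  rw [transpose_mul_self_apply_of_incidence hN]
  obtain rfl | hxy := eq_or_ne x y
  · simp [hrep]
  · simp [hdes x y hxy, one_apply_ne hxy]

end Incidence

theorem stmt10_general {α : Type*} [Fintype α] [DecidableEq α]
    (v lam r p : ℕ) (hp : p.Prime)
    (hv : Fintype.card α = v)
    (B : Finset (Finset α))
    (hdes : ∀ x y : α, x ≠ y →
      (B.filter (fun s => x ∈ s ∧ y ∈ s)).card = lam)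
    (hrep : ∀ x : α, (B.filter (fun s => x ∈ s)).card = r)
    (N : Matrix {s // s ∈ B} α (ZMod p))
    (hN : ∀ s x, N s x = if x ∈ s.1 then 1 else 0)
    (hrank : N.rank < v - 1) :
    (p : ℤ) ∣ (r : ℤ) - (lam : ℤ) := by
  have := Fact.mk hp
  by_contra hdvd
  have hne : (r : ZMod p) - lam ≠ 0 := by
    rw [← ZMod.intCast_zmod_eq_zero_iff_dvd] at hdvd
    exact_mod_cast hdvd
  have hcard := card_le_rank_smul_one_add_add_rank hne
    (of fun _ _ => (lam : ZMod p) : Matrix α α (ZMod p))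
  rw [← transpose_mul_self_eq_of_design hN hdes hrep] at hcard
  have hgram := rank_mul_le_right Nᵀ N
  have hconst := rank_of_const_le_one (m := α) (n := α) (lam : ZMod p)
  omega

/-- Hamada: if the F_p-rank of the incidence matrix of a 2-(v,k,λ) design
with replication number r is less than v−1, then p divides r−λ. -/
theorem stmt10 {α : Type*} [Fintype α] [DecidableEq α]
    (v k lam r p : ℕ) (hp : p.Prime)
    (hv : Fintype.card α = v) (hk2 : 2 ≤ k) (hkv : k ≤ v)
    (B : Finset (Finset α))
    (hk : ∀ s ∈ B, s.card = k)
    (hdes : ∀ x y : α, x ≠ y →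
      (B.filter (fun s => x ∈ s ∧ y ∈ s)).card = lam)
    (hrep : ∀ x : α, (B.filter (fun s => x ∈ s)).card = r)
    (N : Matrix {s // s ∈ B} α (ZMod p))
    (hN : ∀ s x, N s x = if x ∈ s.1 then 1 else 0)
    (hrank : N.rank < v - 1) :
    (p : ℤ) ∣ (r : ℤ) - (lam : ℤ) :=
  stmt10_general v lam r p hp hv B hdes hrep N hN hrank
end

section
/- Let N be the incidence matrix of a combinatorial 2-(v,k,λ) design with replication number r, and p a prime. If p divides r but does not divide r−λ, then the rank of N over F_p is at least v−1. -/
/-!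
Counting flags gives `Nᵀ N = (r - λ) I + λ J`. Over a field, `a I + b J` with `a ≠ 0` kills only
multiples of the all-ones vector, since `a x = -b (∑ x) 𝟙`; so its rank is at least `v - 1`, and
`rank N ≥ rank (Nᵀ N)`.
-/

open Finset Matrix

namespace Matrix

variable {K n : Type*} [Field K] [Fintype n] [DecidableEq n]

theorem ker_mulVecLin_smul_one_add_const_le {a b : K} (ha : a ≠ 0) :
    LinearMap.ker (a • (1 : Matrix n n K) + of fun _ _ => b).mulVecLin ≤ K ∙ (1 : n → K) := by
  intro x hx
  have hcoord (i : n) : a * x i + b * ∑ j, x j = 0 := by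
    simpa [add_mulVec, smul_mulVec, mulVec, dotProduct, mul_sum] using congrFun hx i
  refine Submodule.mem_span_singleton.mpr ⟨-(b / a) * ∑ j, x j, funext fun i => ?_⟩
  simp only [Pi.smul_apply, Pi.one_apply, smul_eq_mul, mul_one]
  field_simp
  linear_combination -hcoord i

theorem card_sub_one_le_rank_smul_one_add_const {a b : K} (ha : a ≠ 0) :
    Fintype.card n - 1 ≤ (a • (1 : Matrix n n K) + of fun _ _ => b).rank := by
  have hker := (Submodule.finrank_mono (ker_mulVecLin_smul_one_add_const_le (b := b) ha)).trans
    (finrank_span_le_card ({1} : Set (n → K)))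
  rw [Set.toFinset_singleton, card_singleton] at hker
  have hsum :=
    LinearMap.finrank_range_add_finrank_ker (a • (1 : Matrix n n K) + of fun _ _ => b).mulVecLin
  rw [Module.finrank_fintype_fun_eq_card] at hsum
  rw [rank]
  omega

end Matrix

section Incidence

variable {α R : Type*} [DecidableEq α] {B : Finset (Finset α)}

theorem incidence_transpose_mul_self_apply [NonAssocSemiring R] {N : Matrix {s // s ∈ B} α R}
    (hN : ∀ s x, N s x = if x ∈ s.1 then 1 else 0) (x y : α) :
    (Nᵀ * N) x y = #{s ∈ B | x ∈ s ∧ y ∈ s} := by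
  simp only [mul_apply, transpose_apply, hN, ite_zero_mul_ite_zero, mul_one]
  rw [sum_coe_sort B (fun s => if x ∈ s ∧ y ∈ s then (1 : R) else 0), sum_boole]

theorem incidence_transpose_mul_self_eq [Fintype α] [Ring R] {N : Matrix {s // s ∈ B} α R}
    {r lam : ℕ}
    (hN : ∀ s x, N s x = if x ∈ s.1 then 1 else 0)
    (hdes : ∀ x y : α, x ≠ y → #{s ∈ B | x ∈ s ∧ y ∈ s} = lam)
    (hrep : ∀ x : α, #{s ∈ B | x ∈ s} = r) :
    Nᵀ * N = ((r : R) - lam) • (1 : Matrix α α R) + of fun _ _ => (lam : R) := by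
  ext x y
  rw [incidence_transpose_mul_self_apply hN]
  obtain rfl | hxy := eq_or_ne x y
  · simp [and_self, hrep]
  · simp [hdes x y hxy, hxy]

end Incidence

theorem stmt11_general {α : Type*} [Fintype α] [DecidableEq α]
    (v lam r p : ℕ) (hp : p.Prime)
    (hv : Fintype.card α = v)
    (B : Finset (Finset α))
    (hdes : ∀ x y : α, x ≠ y →
      (B.filter (fun s => x ∈ s ∧ y ∈ s)).card = lam)
    (hrep : ∀ x : α, (B.filter (fun s => x ∈ s)).card = r)
    (N : Matrix {s // s ∈ B} α (ZMod p))
    (hN : ∀ s x, N s x = if x ∈ s.1 then 1 else 0)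
    (hndvd : ¬ ((p : ℤ) ∣ (r : ℤ) - (lam : ℤ))) :
    v - 1 ≤ N.rank := by
  have : Fact p.Prime := ⟨hp⟩
  have hdiag : (r : ZMod p) - lam ≠ 0 := by
    rwa [← Int.cast_natCast, ← Int.cast_natCast lam, ← Int.cast_sub, Ne,
      ZMod.intCast_zmod_eq_zero_iff_dvd]
  calc v - 1 ≤ (Nᵀ * N).rank := by
        rw [incidence_transpose_mul_self_eq hN hdes hrep, ← hv]
        exact card_sub_one_le_rank_smul_one_add_const hdiag
    _ ≤ N.rank := rank_mul_le_right _ _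

/-- Hamada: if p divides r but p does not divide r−λ, then the F_p-rank of
the incidence matrix of a 2-(v,k,λ) design with replication number r is
at least v−1. -/
theorem stmt11 {α : Type*} [Fintype α] [DecidableEq α]
    (v k lam r p : ℕ) (hp : p.Prime)
    (hv : Fintype.card α = v) (hk2 : 2 ≤ k) (hkv : k ≤ v)
    (B : Finset (Finset α))
    (hk : ∀ s ∈ B, s.card = k)
    (hdes : ∀ x y : α, x ≠ y →
      (B.filter (fun s => x ∈ s ∧ y ∈ s)).card = lam)
    (hrep : ∀ x : α, (B.filter (fun s => x ∈ s)).card = r)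
    (N : Matrix {s // s ∈ B} α (ZMod p))
    (hN : ∀ s x, N s x = if x ∈ s.1 then 1 else 0)
    (hdvd : p ∣ r) (hndvd : ¬ ((p : ℤ) ∣ (r : ℤ) - (lam : ℤ))) :
    v - 1 ≤ N.rank :=
  stmt11_general v lam r p hp hv B hdes hrep N hN hndvd
end
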